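/- Let K^+ := {a ∈ Z(H) : t(a) = a}, the t-invariant part of the center of H, a commutative ℚ-subalgebra of H. Then K^+ is a product of totally real number fields: every ℚ-algebra homomorphism K^+ → ℂ has image contained in ℝ. -/

import Mathlib

open scoped TensorProduct

noncomputable section

/-- Complex conjugation on `ℂ` as a `ℚ`-algebra homomorphism. -/
def conjQAlg : ℂ →ₐ[ℚ] ℂ := (Complex.conjAe.restrictScalars ℚ).toAlgHom

variable (H : Type) [Ring H] [Algebra ℚ H] [FiniteDimensional ℚ H]

/-- The conjugate-linear involution of `H_ℂ = ℂ ⊗[ℚ] H` fixing `H`. -/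
def sigmaC : ℂ ⊗[ℚ] H →ₗ[ℚ] ℂ ⊗[ℚ] H :=
  (Algebra.TensorProduct.map conjQAlg (AlgHom.id ℚ H)).toLinearMap

/-- The inclusion of `H` into `H_ℂ = ℂ ⊗[ℚ] H`. -/
def inclH : H →ₐ[ℚ] ℂ ⊗[ℚ] H := Algebra.TensorProduct.includeRight

/-- The data of a polarized weight 2 Hodge structure on a finite-dimensional `ℚ`-algebra `H`,
compatible with the ring structure:
(i) a Hodge decomposition `H_ℂ = H^{2,0} ⊕ H^{1,1} ⊕ H^{0,2}` with `σ(H^{2,0}) = H^{0,2}`,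
`σ(H^{1,1}) = H^{1,1}`;
(ii) a polarization: a symmetric `ℚ`-bilinear form `B` on `H` with `ℂ`-bilinear extension `BC`
to `H_ℂ`, whose associated Hermitian pairing `h(α,β) := BC α (σ β)` makes the Hodge pieces
pairwise orthogonal and is positive definite on `H^{2,0}`, `H^{0,2}` and negative definite on
`H^{1,1}`;
(iii) the product is a morphism of Hodge structures of bidegree `(-1,-1)`:
`H^{p,q}·H^{p',q'} ⊆ H^{p+p'-1,q+q'-1}`;
(iv) an adjunction `t`: a `ℚ`-linear involution with `t(ab) = t(b)t(a)`,
`⟨ab,c⟩ = ⟨b, t(a)c⟩` and `⟨ab,c⟩ = ⟨a, c·t(b)⟩`. -/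
structure HodgeAlgebraData where
  H20 : Submodule ℂ (ℂ ⊗[ℚ] H)
  H11 : Submodule ℂ (ℂ ⊗[ℚ] H)
  H02 : Submodule ℂ (ℂ ⊗[ℚ] H)
  sup_top : H20 ⊔ H11 ⊔ H02 = ⊤
  disj1 : H20 ⊓ (H11 ⊔ H02) = ⊥
  disj2 : H11 ⊓ H02 = ⊥
  sigma_20 : ∀ x ∈ H20, sigmaC H x ∈ H02
  sigma_02 : ∀ x ∈ H02, sigmaC H x ∈ H20
  sigma_11 : ∀ x ∈ H11, sigmaC H x ∈ H11
  B : H →ₗ[ℚ] H →ₗ[ℚ] ℚ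
  B_symm : ∀ a b : H, B a b = B b a
  BC : (ℂ ⊗[ℚ] H) →ₗ[ℂ] (ℂ ⊗[ℚ] H) →ₗ[ℂ] ℂ
  BC_extends : ∀ a b : H, BC (inclH H a) (inclH H b) = (B a b : ℂ)
  BC_symm : ∀ x y, BC x y = BC y x
  BC_conj : ∀ x y, BC (sigmaC H x) (sigmaC H y) = starRingEnd ℂ (BC x y)
  orth_20_11 : ∀ x ∈ H20, ∀ y ∈ H11, BC x (sigmaC H y) = 0
  orth_20_02 : ∀ x ∈ H20, ∀ y ∈ H02, BC x (sigmaC H y) = 0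
  orth_11_02 : ∀ x ∈ H11, ∀ y ∈ H02, BC x (sigmaC H y) = 0
  pos_20 : ∀ x ∈ H20, x ≠ 0 → 0 < (BC x (sigmaC H x)).re ∧ (BC x (sigmaC H x)).im = 0
  pos_02 : ∀ x ∈ H02, x ≠ 0 → 0 < (BC x (sigmaC H x)).re ∧ (BC x (sigmaC H x)).im = 0
  neg_11 : ∀ x ∈ H11, x ≠ 0 → (BC x (sigmaC H x)).re < 0 ∧ (BC x (sigmaC H x)).im = 0
  mul_20_20 : ∀ x ∈ H20, ∀ y ∈ H20, x * y = 0
  mul_20_11 : ∀ x ∈ H20, ∀ y ∈ H11, x * y ∈ H20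
  mul_11_20 : ∀ x ∈ H11, ∀ y ∈ H20, x * y ∈ H20
  mul_11_11 : ∀ x ∈ H11, ∀ y ∈ H11, x * y ∈ H11
  mul_20_02 : ∀ x ∈ H20, ∀ y ∈ H02, x * y ∈ H11
  mul_02_20 : ∀ x ∈ H02, ∀ y ∈ H20, x * y ∈ H11
  mul_02_02 : ∀ x ∈ H02, ∀ y ∈ H02, x * y = 0
  mul_11_02 : ∀ x ∈ H11, ∀ y ∈ H02, x * y ∈ H02
  mul_02_11 : ∀ x ∈ H02, ∀ y ∈ H11, x * y ∈ H02
  t : H →ₗ[ℚ] H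
  t_invol : ∀ a : H, t (t a) = a
  t_mul : ∀ a b : H, t (a * b) = t b * t a
  adj_left : ∀ a b c : H, B (a * b) c = B b (t a * c)
  adj_right : ∀ a b c : H, B (a * b) c = B a (c * t b)

variable {H}

/-- `W := H^{2,0}·H_ℂ`, the `ℂ`-linear span of all products `x·y` with `x ∈ H^{2,0}`,
`y ∈ H_ℂ`. -/
def HodgeAlgebraData.W (D : HodgeAlgebraData H) : Submodule ℂ (ℂ ⊗[ℚ] H) := D.H20 * ⊤

/-- `σ(W)`, the image of `W` under the conjugation `σ`, as a `ℚ`-subspace of `H_ℂ`. -/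
def HodgeAlgebraData.sigmaW (D : HodgeAlgebraData H) : Submodule ℚ (ℂ ⊗[ℚ] H) :=
  (D.W.restrictScalars ℚ).map (sigmaC H)

/-- The `ℂ`-linear extension of `t` to `H_ℂ`. -/
def HodgeAlgebraData.tC (D : HodgeAlgebraData H) : ℂ ⊗[ℚ] H →ₗ[ℂ] ℂ ⊗[ℚ] H :=
  LinearMap.baseChange ℂ D.t

/-- `K⁺`, the `t`-invariant part of the center of `H`, as a subring of `H`. -/
def HodgeAlgebraData.Kplus (D : HodgeAlgebraData H) : Subring H where
  carrier := {a | (∀ b : H, a * b = b * a) ∧ D.t a = a}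
  zero_mem' := ⟨fun b => by simp, map_zero _⟩
  one_mem' := by
    refine ⟨fun b => by rw [one_mul, mul_one], ?_⟩
    have h : ∀ a : H, D.t a = D.t a * D.t 1 := fun a => by
      conv_lhs => rw [← one_mul a, D.t_mul]
    have h2 := h (D.t 1)
    rw [D.t_invol, one_mul] at h2
    exact h2.symm
  add_mem' := fun {a b} ha hb =>
    ⟨fun c => by rw [add_mul, mul_add, ha.1, hb.1], by rw [map_add, ha.2, hb.2]⟩
  neg_mem' := fun {a} ha =>
    ⟨fun c => by rw [neg_mul, mul_neg, ha.1], by rw [map_neg, ha.2]⟩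
  mul_mem' := fun {a b} ha hb =>
    ⟨fun c => by rw [mul_assoc, hb.1, ← mul_assoc, ha.1, mul_assoc],
     by rw [D.t_mul, ha.2, hb.2, hb.1]⟩

/-! A central `t`-symmetric element `a` splits into Hodge components `a = a₂ + a₀ + aₙ` of
types `(2,0)`, `(1,1)`, `(0,2)`. Multiplication by `a₀` preserves each Hodge piece, on which
`h` is definite, and `h(a₀y, y) = h(ay, y)` is real there because `a` is `h`-self-adjoint; so
`a₀` has only real eigenvalues on `H_ℂ`. Since `a₂ + aₙ` is nilpotent and commutes with `a`,
the same holds for `a`. A ring homomorphism `φ : K⁺ → ℂ` kills `1 ⊗ a - φ(a) ⊗ 1` in the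
finite-dimensional algebra `ℂ ⊗ K⁺`, which is therefore a zero divisor there, hence also in
`ℂ ⊗ H ⊇ ℂ ⊗ K⁺`: `φ(a)` is an eigenvalue of `a`, so it is real. -/

theorem IsLeftRegular.add_of_isNilpotent {R : Type*} [Ring R] {c n : R} (hc : IsLeftRegular c)
    (hn : IsNilpotent n) (hcomm : Commute n c) : IsLeftRegular (c + n) := by
  rw [isLeftRegular_iff_right_eq_zero_of_mul] at hc ⊢
  intro y hy
  obtain ⟨k, hk⟩ := hn
  suffices ∀ m, n ^ m * y = 0 → y = 0 from this k (by rw [hk, zero_mul])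
  intro m
  induction m with
  | zero => simp
  | succ m ih =>
    intro hm
    refine ih (hc _ ?_)
    calc c * (n ^ m * y) = n ^ m * c * y := by rw [← mul_assoc, (hcomm.pow_left m).eq]
      _ = n ^ m * ((c + n) * y) - n ^ (m + 1) * y := by rw [pow_succ]; noncomm_ring
      _ = 0 := by rw [hy, hm, mul_zero, sub_zero]

theorem not_isLeftRegular_includeRight_sub_algebraMap {F L A : Type*} [Field F] [Field L]
    [Algebra F L] [Ring A] [Algebra F A] (K : Subalgebra F A) [FiniteDimensional F K]
    (φ : K →ₐ[F] L) (x : K) :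
    ¬ IsLeftRegular (Algebra.TensorProduct.includeRight (R := F) (A := L) (x : A) -
      algebraMap L (L ⊗[F] A) (φ x)) := by
  intro hreg
  set j : L ⊗[F] K →ₐ[L] L ⊗[F] A := Algebra.TensorProduct.map (AlgHom.id L L) K.val
  have hj : Function.Injective j :=
    Module.Flat.lTensor_preserves_injective_linearMap K.val.toLinearMap Subtype.val_injective
  set u : L ⊗[F] K := Algebra.TensorProduct.includeRight x - algebraMap L _ (φ x)
  have hju : j u = Algebra.TensorProduct.includeRight (x : A) - algebraMap L _ (φ x) := by
    simp [u, j]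
  have hu : IsLeftRegular u := fun w₁ w₂ h =>
    hj <| hreg <| show _ * j w₁ = _ * j w₂ by rw [← hju, ← map_mul, ← map_mul]; exact congrArg j h
  obtain ⟨v, hv⟩ := (LinearMap.mulLeft L u).surjective_of_injective hu 1
  set ψ : L ⊗[F] K →ₐ[L] L :=
    Algebra.TensorProduct.lift (Algebra.ofId L L) φ fun _ _ => Commute.all _ _
  have hψ : ψ u = 0 := by simp [u, ψ]
  simpa [hψ] using congrArg ψ hv

section Conjugation

variable {H : Type} [Ring H] [Algebra ℚ H]

theorem sigmaC_mul (x y : ℂ ⊗[ℚ] H) : sigmaC H (x * y) = sigmaC H x * sigmaC H y :=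
  map_mul (Algebra.TensorProduct.map conjQAlg (AlgHom.id ℚ H)) x y

theorem sigmaC_inclH (a : H) : sigmaC H (inclH H a) = inclH H a := by
  simp [sigmaC, inclH, conjQAlg]

theorem sigmaC_sigmaC (x : ℂ ⊗[ℚ] H) : sigmaC H (sigmaC H x) = x := by
  induction x using TensorProduct.induction_on with
  | zero => simp
  | tmul c h => simp [sigmaC, conjQAlg]
  | add u v hu hv => simp only [map_add, hu, hv]

theorem commute_inclH {a : H} (ha : ∀ b : H, a * b = b * a) (y : ℂ ⊗[ℚ] H) :
    Commute (inclH H a) y := by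
  induction y using TensorProduct.induction_on with
  | zero => exact .zero_right _
  | tmul c b => simp [Commute, SemiconjBy, inclH, ha]
  | add u v hu hv => exact hu.add_right hv

theorem inclH_mul_tmul (a b : H) (c : ℂ) :
    inclH H a * (c ⊗ₜ[ℚ] b) = c • inclH H (a * b) := by
  simp [inclH, TensorProduct.smul_tmul']

end Conjugation

namespace HodgeAlgebraData

variable {H : Type} [Ring H] [Algebra ℚ H] (D : HodgeAlgebraData H)

theorem eq_zero_of_add_eq_zero {p q r : ℂ ⊗[ℚ] H} (hp : p ∈ D.H20) (hq : q ∈ D.H11)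
    (hr : r ∈ D.H02) (h : p + q + r = 0) : p = 0 ∧ q = 0 ∧ r = 0 := by
  have hp0 : p = 0 := by
    have hmem : p ∈ D.H20 ⊓ (D.H11 ⊔ D.H02) :=
      ⟨hp, by
        rw [eq_neg_of_add_eq_zero_left (by rwa [← add_assoc] : p + (q + r) = 0)]
        exact neg_mem (add_mem (Submodule.mem_sup_left hq) (Submodule.mem_sup_right hr))⟩
    simpa [D.disj1] using hmem
  rw [hp0, zero_add] at h
  have hq0 : q = 0 := by
    have hmem : q ∈ D.H11 ⊓ D.H02 := ⟨hq, by rw [eq_neg_of_add_eq_zero_left h]; exact neg_mem hr⟩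
    simpa [D.disj2] using hmem
  rw [hq0, zero_add] at h
  exact ⟨hp0, hq0, h⟩

structure IsHodgeDecomp (v p q r : ℂ ⊗[ℚ] H) : Prop where
  mem_H20 : p ∈ D.H20
  mem_H11 : q ∈ D.H11
  mem_H02 : r ∈ D.H02
  eq_add : v = p + q + r

theorem exists_isHodgeDecomp (v : ℂ ⊗[ℚ] H) : ∃ p q r, D.IsHodgeDecomp v p q r := by
  have hv : v ∈ D.H20 ⊔ D.H11 ⊔ D.H02 := D.sup_top ▸ Submodule.mem_top
  obtain ⟨y, hy, r, hr, rfl⟩ := Submodule.mem_sup.mp hv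
  obtain ⟨p, hp, q, hq, rfl⟩ := Submodule.mem_sup.mp hy
  exact ⟨p, q, r, hp, hq, hr, rfl⟩

def herm (x y : ℂ ⊗[ℚ] H) : ℂ := D.BC x (sigmaC H y)

theorem herm_swap (x y : ℂ ⊗[ℚ] H) : D.herm y x = starRingEnd ℂ (D.herm x y) := by
  rw [herm, herm, ← D.BC_conj, sigmaC_sigmaC, D.BC_symm]

theorem herm_eq_zero_of_mem_H11_H20 {x y : ℂ ⊗[ℚ] H} (hx : x ∈ D.H11) (hy : y ∈ D.H20) :
    D.herm x y = 0 := by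
  rw [herm_swap, herm, D.orth_20_11 y hy x hx, map_zero]

theorem herm_eq_zero_of_mem_H02_H11 {x y : ℂ ⊗[ℚ] H} (hx : x ∈ D.H02) (hy : y ∈ D.H11) :
    D.herm x y = 0 := by
  rw [herm_swap, herm, D.orth_11_02 y hy x hx, map_zero]

theorem herm_self_ne_zero {y : ℂ ⊗[ℚ] H} (hy : y ∈ D.H20 ∨ y ∈ D.H11 ∨ y ∈ D.H02)
    (hy0 : y ≠ 0) : D.herm y y ≠ 0 := by
  intro h
  unfold herm at h
  rcases hy with hy | hy | hy
  · simpa [h] using (D.pos_20 y hy hy0).1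
  · simpa [h] using (D.neg_11 y hy hy0).1
  · simpa [h] using (D.pos_02 y hy hy0).1

theorem BC_inclH_mul (a : H) (x y : ℂ ⊗[ℚ] H) :
    D.BC (inclH H a * x) y = D.BC x (inclH H (D.t a) * y) := by
  have tmul_eq : ∀ (c : ℂ) (b : H), c ⊗ₜ[ℚ] b = c • inclH H b := fun c b => by
    simp [inclH, TensorProduct.smul_tmul']
  induction x using TensorProduct.induction_on with
  | zero => simp
  | add u v hu hv => simp only [mul_add, map_add, LinearMap.add_apply, hu, hv]
  | tmul c b =>
    induction y using TensorProduct.induction_on with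
    | zero => simp
    | add u v hu hv => simp only [mul_add, map_add, hu, hv]
    | tmul c' b' =>
      rw [inclH_mul_tmul, inclH_mul_tmul, tmul_eq, tmul_eq]
      simp only [map_smul, LinearMap.smul_apply, D.BC_extends, D.adj_left]

theorem herm_inclH_mul {a : H} (ht : D.t a = a) (x y : ℂ ⊗[ℚ] H) :
    D.herm (inclH H a * x) y = D.herm x (inclH H a * y) := by
  rw [herm, herm, BC_inclH_mul, ht, sigmaC_mul, sigmaC_inclH]

theorem herm_add_left (x y w : ℂ ⊗[ℚ] H) : D.herm (x + y) w = D.herm x w + D.herm y w := by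
  simp [herm]

theorem herm_smul_left (c : ℂ) (x y : ℂ ⊗[ℚ] H) : D.herm (c • x) y = c * D.herm x y := by
  simp [herm]

section Components

variable {D} {a : H} {a2 a0 an : ℂ ⊗[ℚ] H}

theorem commute_of_central (ha : ∀ b : H, a * b = b * a)
    (hd : D.IsHodgeDecomp (inclH H a) a2 a0 an) : Commute a2 an := by
  have h := (commute_inclH ha a2).eq
  simp only [hd.eq_add, add_mul, mul_add, D.mul_20_20 _ hd.mem_H20 _ hd.mem_H20, zero_add] at h
  obtain ⟨-, h11, -⟩ := D.eq_zero_of_add_eq_zero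
    (sub_mem (D.mul_11_20 _ hd.mem_H11 _ hd.mem_H20) (D.mul_20_11 _ hd.mem_H20 _ hd.mem_H11))
    (sub_mem (D.mul_02_20 _ hd.mem_H02 _ hd.mem_H20) (D.mul_20_02 _ hd.mem_H20 _ hd.mem_H02))
    (zero_mem _) (by rw [add_zero, sub_add_sub_comm, h, sub_self])
  exact (sub_eq_zero.mp h11).symm

theorem herm_mul_self_of_mem_H20 (hd : D.IsHodgeDecomp (inclH H a) a2 a0 an) {y : ℂ ⊗[ℚ] H}
    (hy : y ∈ D.H20) : D.herm ((a2 + an) * y) y = 0 := by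
  rw [add_mul, D.mul_20_20 _ hd.mem_H20 _ hy, zero_add]
  exact D.herm_eq_zero_of_mem_H11_H20 (D.mul_02_20 _ hd.mem_H02 _ hy) hy

theorem herm_mul_self_of_mem_H11 (hd : D.IsHodgeDecomp (inclH H a) a2 a0 an) {y : ℂ ⊗[ℚ] H}
    (hy : y ∈ D.H11) : D.herm ((a2 + an) * y) y = 0 := by
  rw [add_mul, herm_add_left, D.herm_eq_zero_of_mem_H02_H11 (D.mul_02_11 _ hd.mem_H02 _ hy) hy,
    add_zero]
  exact D.orth_20_11 _ (D.mul_20_11 _ hd.mem_H20 _ hy) _ hy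

theorem herm_mul_self_of_mem_H02 (hd : D.IsHodgeDecomp (inclH H a) a2 a0 an) {y : ℂ ⊗[ℚ] H}
    (hy : y ∈ D.H02) : D.herm ((a2 + an) * y) y = 0 := by
  rw [add_mul, D.mul_02_02 _ hd.mem_H02 _ hy, add_zero]
  exact D.orth_11_02 _ (D.mul_20_02 _ hd.mem_H20 _ hy) _ hy

theorem herm_self_eq_zero_of_mul_eq_smul (ht : D.t a = a)
    (hd : D.IsHodgeDecomp (inclH H a) a2 a0 an) {z : ℂ} (hz : starRingEnd ℂ z ≠ z)
    {y : ℂ ⊗[ℚ] H} (hy : a0 * y = z • y) (hN : D.herm ((a2 + an) * y) y = 0) :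
    D.herm y y = 0 := by
  have h_a0 : D.herm (a0 * y) y = D.herm (inclH H a * y) y := by
    rw [hd.eq_add, show a2 + a0 + an = a0 + (a2 + an) by abel, add_mul, herm_add_left, hN,
      add_zero]
  have h_real : starRingEnd ℂ (D.herm (a0 * y) y) = D.herm (a0 * y) y := by
    rw [h_a0, ← herm_swap, ← D.herm_inclH_mul ht]
  have h_yy : starRingEnd ℂ (D.herm y y) = D.herm y y := (D.herm_swap y y).symm
  rw [hy, herm_smul_left, map_mul, h_yy] at h_real
  exact (mul_eq_mul_right_iff.mp h_real).resolve_left hz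

theorem eq_zero_of_mul_eq_smul (ht : D.t a = a) (hd : D.IsHodgeDecomp (inclH H a) a2 a0 an)
    {z : ℂ} (hz : starRingEnd ℂ z ≠ z) {y : ℂ ⊗[ℚ] H} (hy : a0 * y = z • y) : y = 0 := by
  obtain ⟨p, q, r, hdy⟩ := D.exists_isHodgeDecomp y
  rw [hdy.eq_add, mul_add, mul_add, smul_add, smul_add] at hy
  obtain ⟨hp, hq, hr⟩ := D.eq_zero_of_add_eq_zero
    (sub_mem (D.mul_11_20 _ hd.mem_H11 _ hdy.mem_H20) (D.H20.smul_mem z hdy.mem_H20))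
    (sub_mem (D.mul_11_11 _ hd.mem_H11 _ hdy.mem_H11) (D.H11.smul_mem z hdy.mem_H11))
    (sub_mem (D.mul_11_02 _ hd.mem_H11 _ hdy.mem_H02) (D.H02.smul_mem z hdy.mem_H02))
    (by rw [sub_add_sub_comm, sub_add_sub_comm, hy, sub_self])
  have piece_eq_zero : ∀ w, (w ∈ D.H20 ∨ w ∈ D.H11 ∨ w ∈ D.H02) → a0 * w - z • w = 0 →
      D.herm ((a2 + an) * w) w = 0 → w = 0 := fun w hw hw_eigen hN => by
    by_contra hw0
    exact D.herm_self_ne_zero hw hw0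
      (herm_self_eq_zero_of_mul_eq_smul ht hd hz (sub_eq_zero.mp hw_eigen) hN)
  rw [hdy.eq_add, piece_eq_zero p (.inl hdy.mem_H20) hp (herm_mul_self_of_mem_H20 hd hdy.mem_H20),
    piece_eq_zero q (.inr (.inl hdy.mem_H11)) hq (herm_mul_self_of_mem_H11 hd hdy.mem_H11),
    piece_eq_zero r (.inr (.inr hdy.mem_H02)) hr (herm_mul_self_of_mem_H02 hd hdy.mem_H02),
    add_zero, add_zero]

end Components

theorem isLeftRegular_inclH_sub_algebraMap {a : H} (ha : ∀ b : H, a * b = b * a)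
    (ht : D.t a = a) {z : ℂ} (hz : starRingEnd ℂ z ≠ z) :
    IsLeftRegular (inclH H a - algebraMap ℂ (ℂ ⊗[ℚ] H) z) := by
  obtain ⟨a2, a0, an, hd⟩ := D.exists_isHodgeDecomp (inclH H a)
  have hN : IsNilpotent (a2 + an) := (commute_of_central ha hd).isNilpotent_add
    ⟨2, by rw [sq]; exact D.mul_20_20 _ hd.mem_H20 _ hd.mem_H20⟩
    ⟨2, by rw [sq]; exact D.mul_02_02 _ hd.mem_H02 _ hd.mem_H02⟩
  have hc : IsLeftRegular (a0 - algebraMap ℂ (ℂ ⊗[ℚ] H) z) :=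
    isLeftRegular_iff_right_eq_zero_of_mul.mpr fun y hy =>
      eq_zero_of_mul_eq_smul ht hd hz (by rwa [sub_mul, ← Algebra.smul_def, sub_eq_zero] at hy)
  have hNc : Commute (a2 + an) (a0 - algebraMap ℂ (ℂ ⊗[ℚ] H) z) := by
    rw [show a2 + an = inclH H a - a0 by rw [hd.eq_add]; abel]
    exact (commute_inclH ha _).sub_left
      ((Commute.refl a0).sub_right (Algebra.commute_algebraMap_right z a0))
  rw [show inclH H a - algebraMap ℂ _ z = a0 - algebraMap ℂ _ z + (a2 + an) by
    rw [hd.eq_add]; abel]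
  exact hc.add_of_isNilpotent hN hNc

def KplusSubalgebra : Subalgebra ℚ H :=
  { D.Kplus with
    algebraMap_mem' := fun q => by
      refine ⟨fun b => Algebra.commutes q b, ?_⟩
      rw [Algebra.algebraMap_eq_smul_one, map_smul, D.Kplus.one_mem.2] }

end HodgeAlgebraData

/-- `K⁺`, the `t`-invariant part of the center of `H`, is a product of
totally real number fields: every (`ℚ`-algebra) homomorphism `K⁺ → ℂ` has image contained
in `ℝ`. -/
theorem Kplus_totally_real (D : HodgeAlgebraData H) :
    ∀ (φ : D.Kplus →+* ℂ) (x : D.Kplus), (φ x).im = 0 := by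
  intro φ x
  by_contra hx
  exact not_isLeftRegular_includeRight_sub_algebraMap D.KplusSubalgebra
    (show D.KplusSubalgebra →+* ℂ from φ).toRatAlgHom ⟨x, x.2⟩
    (D.isLeftRegular_inclH_sub_algebraMap x.2.1 x.2.2 (mt Complex.conj_eq_iff_im.mp hx))
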